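/- There exists a 1-step shift space over an infinite alphabet that is not conjugate to any 0-step shift space. Concretely: fix x_0 ∈ A (A infinite) and define f̃ : A² → {0,1} by f̃(x,y) = 1 iff (x = x_0) or (x ≠ x_0 and y = x). Then the 1-step shift X_f (forbidding pairs with f̃ = 0) contains exactly one word of length 1 (namely x_0), while every nonempty 0-step shift space (a full shift Σ_B) over an alphabet making it contain length-1 words contains infinitely many words of length 1; hence X_f is not conjugate to any 0-step shift. -/

import Mathlib

/-!
A letter `c ≠ x₀` of `X_f` can only be followed by `c` itself, so the word `c` has a single
one-letter extension and is not in `X_f^fin`; the word `x₀` can be followed by any letter.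
Hence `x₀` is the only word of length `1` in `X_f`. A `0`-step shift `X_g̃` is the full shift
over the letters `b` with `g̃(b) = 1`; as soon as it has a word `y` of length `1`, the infinitely
many letters that can follow `y` are allowed, and each of them is a word of length `1`.
A conjugacy preserves length, so it would map the single word of length `1` of `X_f` onto
the infinitely many of the `0`-step shift.
-/

open Set Filter Topology

/-- Elements of the full shift `Σ_A`: `Option`-valued sequences that stay `none`
once they are `none` (so they are either everywhere-defined infinite sequences,
or finite words followed by `none`s; the empty word is the all-`none` sequence). -/
def IsWordFun {A : Type*} (x : ℕ → Option A) : Prop :=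
  ∀ m n : ℕ, m ≤ n → x m = none → x n = none

/-- The full shift `Σ_A = A^ℕ ∪ {finite words over A}`. -/
def FullShift (A : Type*) : Type _ := {x : ℕ → Option A // IsWordFun x}

namespace FullShift

variable {A B : Type*}

/-- The length of an element of the full shift, in `ℕ∞`. -/
noncomputable def len (x : FullShift A) : ℕ∞ :=
  sInf {n : ℕ∞ | ∃ m : ℕ, n = (m : ℕ∞) ∧ x.1 m = none}

/-- The shift map `σ`, deleting the first letter. -/
def shift (x : FullShift A) : FullShift A :=
  ⟨fun n => x.1 (n + 1), fun m n h hm => x.2 (m + 1) (n + 1) (by omega) hm⟩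

/-- The empty word `∅`. -/
def emptyWord : FullShift A := ⟨fun _ => none, fun _ _ _ _ => rfl⟩

/-- The finite word determined by a list. -/
def word (l : List A) : FullShift A :=
  ⟨fun n => l[n]?, by
    intro m n h hm
    rw [List.getElem?_eq_none_iff] at hm ⊢
    omega⟩

/-- The infinite sequence determined by a function `ℕ → A`. -/
def infSeq (g : ℕ → A) : FullShift A :=
  ⟨fun n => some (g n), by intro m n _ hm; simp at hm⟩

/-- Generalized cylinder set `Z(w, F)`: elements beginning with the finite word `w`
whose next letter, if any, does not lie in the finite set `F`. -/
def Cyl (w : List A) (F : Finset A) : Set (FullShift A) :=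
  {y | (∀ i < w.length, y.1 i = w[i]?) ∧ ∀ a ∈ F, y.1 w.length ≠ some a}

/-- The topology on `Σ_A` generated by the generalized cylinder sets. -/
instance : TopologicalSpace (FullShift A) :=
  TopologicalSpace.generateFrom {S | ∃ (w : List A) (F : Finset A), S = Cyl w F}

/-- A shift space: closed, shift-invariant, with the infinite-extension property. -/
def IsShiftSpace (Λ : Set (FullShift A)) : Prop :=
  IsClosed Λ ∧ (∀ x ∈ Λ, shift x ∈ Λ) ∧
    ∀ x ∈ Λ, ∀ n : ℕ, len x = (n : ℕ∞) →
      {a : A | ∃ z ∈ Λ, (∀ i < n, z.1 i = x.1 i) ∧ z.1 n = some a}.Infinite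

/-- `u` occurs as a subblock of `x`. -/
def Occurs (u : List A) (x : FullShift A) : Prop :=
  ∃ i : ℕ, ∀ j < u.length, x.1 (i + j) = u[j]?

/-- The infinite sequences avoiding every word in `Fb` as a subblock. -/
def XinfL (Fb : Set (List A)) : Set (FullShift A) :=
  {x | (∀ n, x.1 n ≠ none) ∧ ∀ u ∈ Fb, ¬ Occurs u x}

/-- The shift space `X_F` determined by the forbidden words `Fb`: the infinite
sequences avoiding `Fb`, together with the finite words `x` such that for
infinitely many `a ∈ A` some extension `x a y` lies in `X_F^inf`. -/
def XL (Fb : Set (List A)) : Set (FullShift A) :=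
  XinfL Fb ∪ {x | ∃ n : ℕ, len x = (n : ℕ∞) ∧
    {a : A | ∃ z ∈ XinfL Fb, (∀ i < n, z.1 i = x.1 i) ∧ z.1 n = some a}.Infinite}

/-- The infinite sequences all of whose length-`N` windows `v` satisfy `ft v = true`
(i.e. avoiding all length-`N` words `w` with `ft w = 0`). -/
def XinfT {N : ℕ} (ft : (Fin N → A) → Bool) : Set (FullShift A) :=
  {x | (∀ n, x.1 n ≠ none) ∧
    ∀ (i : ℕ) (v : Fin N → A), (∀ j : Fin N, x.1 (i + (j : ℕ)) = some (v j)) → ft v = true}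

/-- The shift space `X_f` determined by forbidding the length-`N` words `w`
with `ft w = 0`. -/
def XT {N : ℕ} (ft : (Fin N → A) → Bool) : Set (FullShift A) :=
  XinfT ft ∪ {x | ∃ n : ℕ, len x = (n : ℕ∞) ∧
    {a : A | ∃ z ∈ XinfT ft, (∀ i < n, z.1 i = x.1 i) ∧ z.1 n = some a}.Infinite}

/-- `Y` is an `M`-step shift space: determined by forbidden words of length `M + 1`,
equivalently by a function `g̃ : B^{M+1} → {0,1}`. -/
def IsStepShift (M : ℕ) (Y : Set (FullShift B)) : Prop :=
  ∃ gt : (Fin (M + 1) → B) → Bool, Y = XT gt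

/-- `φ` is a conjugacy from `Λ` onto `Y`: bijective, continuous, shift-commuting
and length-preserving. -/
def IsConjugacy (Λ : Set (FullShift A)) (Y : Set (FullShift B))
    (φ : FullShift A → FullShift B) : Prop :=
  Set.BijOn φ Λ Y ∧ ContinuousOn φ Λ ∧
    (∀ x ∈ Λ, φ (shift x) = shift (φ x)) ∧ ∀ x ∈ Λ, len (φ x) = len x

/-- `Λ` and `Y` are conjugate shift spaces. -/
def Conjugate (Λ : Set (FullShift A)) (Y : Set (FullShift B)) : Prop :=
  ∃ φ : FullShift A → FullShift B, IsConjugacy Λ Y φ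

/-- The periodic sequence `(x_1 ⋯ x_M b)^∞` of period `M + 1`. -/
def per (M : ℕ) (x : Fin M → A) (b : A) : ℕ → A :=
  fun n => if h : n % (M + 1) < M then x ⟨n % (M + 1), h⟩ else b

lemma len_le_of_eq_none {x : FullShift A} {m : ℕ} (hm : x.1 m = none) : len x ≤ m :=
  sInf_le ⟨m, rfl, hm⟩

lemma le_len_of_forall_ne_none {x : FullShift A} {n : ℕ} (h : ∀ i < n, x.1 i ≠ none) :
    (n : ℕ∞) ≤ len x := by
  refine le_sInf ?_
  rintro _ ⟨m, rfl, hm⟩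
  by_contra! hlt
  exact h m (by exact_mod_cast hlt) hm

lemma len_eq_coe_iff {x : FullShift A} {n : ℕ} :
    len x = n ↔ x.1 n = none ∧ ∀ i < n, x.1 i ≠ none := by
  constructor
  · intro hx
    refine ⟨?_, fun i hi hxi => ?_⟩
    · by_contra hxn
      have : ((n + 1 : ℕ) : ℕ∞) ≤ len x :=
        le_len_of_forall_ne_none fun i hi hxi => hxn (x.2 i n (by omega) hxi)
      rw [hx] at this
      exact absurd (by exact_mod_cast this) n.not_succ_le_self
    · have : len x ≤ i := len_le_of_eq_none hxi
      rw [hx] at this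
      exact absurd (by exact_mod_cast this) (Nat.not_le.2 hi)
  · rintro ⟨hxn, hlt⟩
    exact le_antisymm (len_le_of_eq_none hxn) (le_len_of_forall_ne_none hlt)

lemma len_word (l : List A) : len (word l) = l.length :=
  len_eq_coe_iff.2 ⟨by simp [word], fun i hi => by simp [word, hi]⟩

lemma eq_word_of_len_eq {x : FullShift A} {l : List A} (hlen : len x = l.length)
    (hx : ∀ i < l.length, x.1 i = l[i]?) : x = word l := by
  refine Subtype.ext (funext fun m => ?_)
  rcases lt_or_ge m l.length with hm | hm
  · exact hx m hm
  · rw [x.2 _ m hm (len_eq_coe_iff.1 hlen).1]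
    simp [word, hm]

lemma word_injective : Function.Injective (word : List A → FullShift A) := by
  intro l l' h
  exact List.ext_getElem? fun n => congrArg (fun w : FullShift A => w.1 n) h

def nextLetters (Λ : Set (FullShift A)) (x : FullShift A) (n : ℕ) : Set A :=
  {a | ∃ z ∈ Λ, (∀ i < n, z.1 i = x.1 i) ∧ z.1 n = some a}

lemma mem_XT_iff_of_len_eq {N : ℕ} {ft : (Fin N → A) → Bool} {x : FullShift A} {n : ℕ}
    (hx : len x = n) : x ∈ XT ft ↔ (nextLetters (XinfT ft) x n).Infinite := by
  constructor
  · rintro (hinf | ⟨m, hm, hS⟩)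
    · exact absurd (len_eq_coe_iff.1 hx).1 (hinf.1 n)
    · obtain rfl : m = n := by exact_mod_cast hm.symm.trans hx
      exact hS
  · exact fun hS => Or.inr ⟨n, hx, hS⟩

lemma infSeq_mem_XinfT_iff {N : ℕ} {ft : (Fin N → A) → Bool} {g : ℕ → A} :
    infSeq g ∈ XinfT ft ↔ ∀ i, ft (fun j : Fin N => g (i + j)) = true := by
  constructor
  · exact fun hg i => hg.2 i _ fun j => rfl
  · refine fun hg => ⟨fun n => Option.some_ne_none _, fun i v hv => ?_⟩
    obtain rfl : v = fun j : Fin N => g (i + j) :=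
      funext fun j => (Option.some_injective _ (hv j)).symm
    exact hg i

section ZeroStep

variable {gt : (Fin 1 → B) → Bool}

/-- The alphabet of the full shift that the `0`-step rule `gt` describes. -/
def allowedLetters (gt : (Fin 1 → B) → Bool) : Set B := {a | gt (fun _ => a) = true}

lemma some_mem_allowedLetters {z : FullShift B} (hz : z ∈ XinfT gt) {n : ℕ} {a : B}
    (ha : z.1 n = some a) : a ∈ allowedLetters gt :=
  hz.2 n (fun _ => a) fun j => by rw [Fin.fin_one_eq_zero j]; exact ha

lemma word_mem_XT_of_allowed (hinf : (allowedLetters gt).Infinite) {l : List B}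
    (hl : ∀ a ∈ l, a ∈ allowedLetters gt) : word l ∈ XT gt := by
  rw [mem_XT_iff_of_len_eq (len_word l)]
  refine hinf.mono fun b hb => ⟨infSeq (fun n => l.getD n b), ?_, fun i hi => ?_, ?_⟩
  · refine infSeq_mem_XinfT_iff.2 fun i => ?_
    have hconst : (fun j : Fin 1 => l.getD (i + j) b) = fun _ => l.getD i b :=
      funext fun j => by rw [Fin.fin_one_eq_zero j, Fin.val_zero, add_zero]
    rw [hconst]
    rcases lt_or_ge i l.length with hi | hi
    · rw [List.getD_eq_getElem _ _ hi]
      exact hl _ (List.getElem_mem hi)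
    · rw [List.getD_eq_default _ _ hi]
      exact hb
  · simp [infSeq, word, hi]
  · simp [infSeq]

lemma setOf_len_eq_one_infinite_of_zeroStep {Y : Set (FullShift B)} (hY : IsStepShift 0 Y)
    (hex : ∃ y ∈ Y, len y = ((1 : ℕ) : ℕ∞)) :
    {y ∈ Y | len y = ((1 : ℕ) : ℕ∞)}.Infinite := by
  obtain ⟨gt, rfl⟩ := hY
  obtain ⟨y, hy, hylen⟩ := hex
  have hinf : (allowedLetters gt).Infinite :=
    ((mem_XT_iff_of_len_eq hylen).1 hy).mono <| by
      rintro a ⟨_, hz, -, hza⟩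
      exact some_mem_allowedLetters hz hza
  refine (hinf.image (f := fun a => word [a])
    fun a _ b _ h => List.singleton_injective (word_injective h)).mono ?_
  rintro _ ⟨a, ha, rfl⟩
  exact ⟨word_mem_XT_of_allowed hinf (by simpa using ha), len_word [a]⟩

end ZeroStep

lemma IsConjugacy.image_setOf_len_eq {Λ : Set (FullShift A)} {Y : Set (FullShift B)}
    {φ : FullShift A → FullShift B} (hφ : IsConjugacy Λ Y φ) (n : ℕ∞) :
    φ '' {x ∈ Λ | len x = n} = {y ∈ Y | len y = n} := by
  obtain ⟨hbij, -, -, hlen⟩ := hφ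
  ext y
  constructor
  · rintro ⟨x, ⟨hx, hxn⟩, rfl⟩
    exact ⟨hbij.mapsTo hx, (hlen x hx).trans hxn⟩
  · rintro ⟨hy, hyn⟩
    obtain ⟨x, hx, rfl⟩ := hbij.surjOn hy
    exact ⟨x, ⟨hx, (hlen x hx).symm.trans hyn⟩, rfl⟩

section Pointed

noncomputable def pointedRule (x0 : A) : (Fin 2 → A) → Bool :=
  fun v => @decide (v 0 = x0 ∨ v 1 = v 0) (Classical.dec _)

variable {x0 : A}

lemma pointedRule_eq_true {v : Fin 2 → A} : pointedRule x0 v = true ↔ v 0 = x0 ∨ v 1 = v 0 :=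
  @decide_eq_true_iff _ (Classical.dec _)

lemma nextLetters_word_eq_univ :
    nextLetters (XinfT (pointedRule x0)) (word [x0]) 1 = univ := by
  refine eq_univ_of_forall fun a => ⟨infSeq (fun n => if n = 0 then x0 else a), ?_, ?_, ?_⟩
  · refine infSeq_mem_XinfT_iff.2 fun i => pointedRule_eq_true.2 ?_
    rcases Nat.eq_zero_or_pos i with rfl | hi
    · simp
    · right; simp [hi.ne']
  · intro i hi
    obtain rfl : i = 0 := by omega
    simp [infSeq, word]
  · simp [infSeq]

/-- Only `x0` can be followed by a letter other than itself. -/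
lemma nextLetters_subset_singleton {x : FullShift A} {c : A} (hc : c ≠ x0) (hx : x.1 0 = some c) :
    nextLetters (XinfT (pointedRule x0)) x 1 ⊆ {c} := by
  rintro a ⟨z, hz, hzx, hza⟩
  have hpair := hz.2 0 ![c, a] fun j => by
    fin_cases j
    · simpa [hx] using hzx 0 one_pos
    · simpa using hza
  simpa [pointedRule_eq_true, hc] using hpair

theorem setOf_mem_XT_pointedRule_len_eq_one [Infinite A] :
    {x ∈ XT (pointedRule x0) | len x = ((1 : ℕ) : ℕ∞)} = {word [x0]} := by
  ext x
  constructor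
  · rintro ⟨hx, hlen⟩
    obtain ⟨c, hc⟩ := Option.ne_none_iff_exists'.1 ((len_eq_coe_iff.1 hlen).2 0 one_pos)
    have hinf := (mem_XT_iff_of_len_eq hlen).1 hx
    obtain rfl : c = x0 := by
      by_contra hcx
      exact hinf ((finite_singleton c).subset (nextLetters_subset_singleton hcx hc))
    exact eq_word_of_len_eq hlen fun i hi => by
      obtain rfl : i = 0 := by simpa using hi
      simpa using hc
  · rintro rfl
    refine ⟨(mem_XT_iff_of_len_eq (len_word _)).2 ?_, len_word _⟩
    rw [List.length_singleton, nextLetters_word_eq_univ]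
    exact infinite_univ

end Pointed

end FullShift

/-- The 1-step shift forbidding pairs `(x,y)` with
`¬(x = x_0 ∨ y = x)` contains exactly one word of length 1 (namely `x_0`); every
0-step shift containing a word of length 1 contains infinitely many; hence this
1-step shift is not conjugate to any 0-step shift space. -/
theorem stmt15 {A : Type*} [Infinite A] (x0 : A) :
    let ft : (Fin 2 → A) → Bool :=
      fun v => @decide (v 0 = x0 ∨ v 1 = v 0) (Classical.dec _)
    (FullShift.word [x0] ∈ FullShift.XT ft) ∧
    (∀ x ∈ FullShift.XT ft, FullShift.len x = ((1 : ℕ) : ℕ∞) →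
      x = FullShift.word [x0]) ∧
    (∀ (B : Type*) [Infinite B] (Y : Set (FullShift B)), FullShift.IsStepShift 0 Y →
      (∃ y ∈ Y, FullShift.len y = ((1 : ℕ) : ℕ∞)) →
      {y ∈ Y | FullShift.len y = ((1 : ℕ) : ℕ∞)}.Infinite) ∧
    (∀ (B : Type*) [Infinite B] (Y : Set (FullShift B)), FullShift.IsStepShift 0 Y →
      ¬ FullShift.Conjugate (FullShift.XT ft) Y) := by
  intro ft
  have hlenOne : {x ∈ FullShift.XT ft | FullShift.len x = ((1 : ℕ) : ℕ∞)} =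
      {FullShift.word [x0]} :=
    FullShift.setOf_mem_XT_pointedRule_len_eq_one
  refine ⟨(hlenOne.symm.subset rfl).1, fun x hx hlen => hlenOne.subset ⟨hx, hlen⟩,
    fun B _ Y hY hex => FullShift.setOf_len_eq_one_infinite_of_zeroStep hY hex, ?_⟩
  rintro B _ Y hY ⟨φ, hφ⟩
  have himage := hφ.image_setOf_len_eq ((1 : ℕ) : ℕ∞)
  rw [hlenOne, image_singleton] at himage
  have hmem : φ (FullShift.word [x0]) ∈ {y ∈ Y | FullShift.len y = ((1 : ℕ) : ℕ∞)} :=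
    himage ▸ mem_singleton _
  exact FullShift.setOf_len_eq_one_infinite_of_zeroStep hY ⟨_, hmem⟩
    (himage ▸ finite_singleton _)
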